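/- Let K₁ ∈ ℝ and L₁ ∈ ℝ \ {0}. Then h₁(r₁, r₂) < 0 for all (r₁, r₂) ∈ [0,1]² \ {(0,0)} if and only if K₁ ≤ 2 and L₁ < 0. -/

import Mathlib

/-!
Integrating `d/dθ (sin θ e^{x cos θ})` over a period gives `∫ cos θ e^{x cos θ} = x A(x)` with
`A(x) = ∫ sin² θ e^{x cos θ} ≥ π`, so `V x = x A(x) / Z(x)` where `Z(x) = ∫ e^{x cos θ}`; in
particular `V x` has the sign of `x`. Integrating `d/dθ (sin θ cos θ e^{x cos θ})` gives
`Z − 2A = x ∫ sin² θ cos θ e^{x cos θ}`, and the last integral equals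
`∫ sin² θ cos θ (e^{x cos θ} − 1) > 0` for `x > 0`; hence `V x < x / 2` for `x > 0`, which makes
`h₁ < 0` when `K₁ ≤ 2` and `L₁ < 0`. Conversely `Z(x) ≤ 2π e^x` gives `V x ≥ x / (2 e^x)`, which
exceeds `r` at `x = K₁ r` for small `r > 0` once `K₁ > 2`, and `h₁(0, 1) = V L₁ > 0` if `L₁ > 0`.
-/

open Real Set

/-- The function `V(x) = (∫ cos θ e^{x cos θ} dθ) / (∫ e^{x cos θ} dθ)` over `[0, 2π]`. -/
noncomputable def V (x : ℝ) : ℝ :=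
  (∫ θ in (0:ℝ)..(2 * π), Real.cos θ * Real.exp (x * Real.cos θ)) /
  (∫ θ in (0:ℝ)..(2 * π), Real.exp (x * Real.cos θ))

open intervalIntegral

noncomputable def expCosIntegral (x : ℝ) : ℝ := ∫ θ in (0:ℝ)..2 * π, exp (x * cos θ)

noncomputable def sinSqExpCosIntegral (x : ℝ) : ℝ :=
  ∫ θ in (0:ℝ)..2 * π, sin θ ^ 2 * exp (x * cos θ)

section Integrals

variable (x : ℝ)

theorem expCosIntegral_pos : 0 < expCosIntegral x :=
  intervalIntegral_pos_of_pos (Continuous.intervalIntegrable (by fun_prop) _ _)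
    (fun _ ↦ exp_pos _) (by positivity)

theorem pi_le_sinSqExpCosIntegral : π ≤ sinSqExpCosIntegral x := by
  have h : ∫ θ in (0:ℝ)..2 * π, (sin θ ^ 2 + x * (sin θ ^ 2 * cos θ)) = π := by
    rw [integral_add (Continuous.intervalIntegrable (by fun_prop) _ _)
        (Continuous.intervalIntegrable (by fun_prop) _ _), integral_const_mul, integral_sin_sq,
      integral_sin_sq_mul_cos]
    simp
  rw [← h]
  refine integral_mono_on (by positivity) (Continuous.intervalIntegrable (by fun_prop) _ _)
    (Continuous.intervalIntegrable (by fun_prop) _ _) fun θ _ ↦ ?_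
  have := mul_le_mul_of_nonneg_left (add_one_le_exp (x * cos θ)) (sq_nonneg (sin θ))
  linarith

theorem sinSqExpCosIntegral_pos : 0 < sinSqExpCosIntegral x :=
  pi_pos.trans_le (pi_le_sinSqExpCosIntegral x)

theorem integral_cos_mul_exp_mul_cos :
    ∫ θ in (0:ℝ)..2 * π, cos θ * exp (x * cos θ) = x * sinSqExpCosIntegral x := by
  have hderiv (θ : ℝ) : HasDerivAt (fun θ ↦ sin θ * exp (x * cos θ))
      (cos θ * exp (x * cos θ) - x * (sin θ ^ 2 * exp (x * cos θ))) θ := by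
    refine ((hasDerivAt_sin θ).mul ((hasDerivAt_cos θ).const_mul x).exp).congr_deriv ?_
    ring
  have hzero := integral_eq_sub_of_hasDerivAt (fun θ _ ↦ hderiv θ)
    (Continuous.intervalIntegrable (by fun_prop) 0 (2 * π))
  rw [integral_sub (Continuous.intervalIntegrable (by fun_prop) _ _)
    (Continuous.intervalIntegrable (by fun_prop) _ _), integral_const_mul] at hzero
  simp only [sin_two_pi, sin_zero, zero_mul, sub_zero] at hzero
  rw [sinSqExpCosIntegral]
  linarith

theorem expCosIntegral_sub_two_mul_sinSqExpCosIntegral :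
    expCosIntegral x - 2 * sinSqExpCosIntegral x =
      x * ∫ θ in (0:ℝ)..2 * π, sin θ ^ 2 * cos θ * exp (x * cos θ) := by
  have hderiv (θ : ℝ) : HasDerivAt (fun θ ↦ sin θ * cos θ * exp (x * cos θ))
      (exp (x * cos θ) - 2 * (sin θ ^ 2 * exp (x * cos θ))
        - x * (sin θ ^ 2 * cos θ * exp (x * cos θ))) θ := by
    refine (((hasDerivAt_sin θ).mul (hasDerivAt_cos θ)).mul
      ((hasDerivAt_cos θ).const_mul x).exp).congr_deriv ?_
    simp only [Pi.mul_apply]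
    linear_combination exp (x * cos θ) * sin_sq_add_cos_sq θ
  have hzero := integral_eq_sub_of_hasDerivAt (fun θ _ ↦ hderiv θ)
    (Continuous.intervalIntegrable (by fun_prop) 0 (2 * π))
  rw [integral_sub (Continuous.intervalIntegrable (by fun_prop) _ _)
      (Continuous.intervalIntegrable (by fun_prop) _ _),
    integral_sub (Continuous.intervalIntegrable (by fun_prop) _ _)
      (Continuous.intervalIntegrable (by fun_prop) _ _),
    integral_const_mul, integral_const_mul] at hzero
  simp only [sin_two_pi, sin_zero, zero_mul, sub_zero] at hzero
  rw [expCosIntegral, sinSqExpCosIntegral]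
  linarith

variable {x}

theorem expCosIntegral_le_of_nonneg (hx : 0 ≤ x) : expCosIntegral x ≤ 2 * π * exp x := by
  calc expCosIntegral x ≤ ∫ _ in (0:ℝ)..2 * π, exp x :=
        integral_mono_on (by positivity) (Continuous.intervalIntegrable (by fun_prop) _ _)
          intervalIntegrable_const fun θ _ ↦
            exp_le_exp.mpr (by nlinarith [cos_le_one θ])
    _ = 2 * π * exp x := by simp

theorem integral_sin_sq_mul_cos_mul_exp_pos (hx : 0 < x) :
    0 < ∫ θ in (0:ℝ)..2 * π, sin θ ^ 2 * cos θ * exp (x * cos θ) := by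
  set f : ℝ → ℝ := fun θ ↦ sin θ ^ 2 * (cos θ * (exp (x * cos θ) - 1))
  have hf : Continuous f := by fun_prop
  have hf_nonneg (θ : ℝ) : 0 ≤ f θ := by
    refine mul_nonneg (sq_nonneg _) ?_
    rcases le_total 0 (cos θ) with hc | hc
    · exact mul_nonneg hc (sub_nonneg.mpr (one_le_exp (by positivity)))
    · exact mul_nonneg_of_nonpos_of_nonpos hc
        (sub_nonpos.mpr (exp_le_one_iff.mpr (mul_nonpos_of_nonneg_of_nonpos hx.le hc)))
  have hf_pos : 0 < ∫ θ in (0:ℝ)..2 * π, f θ := by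
    rw [← integral_add_adjacent_intervals (b := π / 2) (hf.intervalIntegrable _ _)
      (hf.intervalIntegrable _ _)]
    have hleft : 0 < ∫ θ in (0:ℝ)..π / 2, f θ := by
      refine intervalIntegral_pos_of_pos_on (hf.intervalIntegrable _ _) (fun θ hθ ↦ ?_)
        (by positivity)
      have hs : 0 < sin θ := sin_pos_of_pos_of_lt_pi hθ.1 (by linarith [hθ.2, pi_pos])
      have hc : 0 < cos θ := cos_pos_of_mem_Ioo ⟨by linarith [hθ.1, pi_pos], hθ.2⟩
      have he : 0 < exp (x * cos θ) - 1 := sub_pos.mpr (one_lt_exp_iff.mpr (by positivity))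
      positivity
    have hright : 0 ≤ ∫ θ in π / 2..2 * π, f θ :=
      integral_nonneg (by linarith [pi_pos]) fun θ _ ↦ hf_nonneg θ
    linarith
  have hf_eq : ∫ θ in (0:ℝ)..2 * π, f θ =
      (∫ θ in (0:ℝ)..2 * π, sin θ ^ 2 * cos θ * exp (x * cos θ)) -
        ∫ θ in (0:ℝ)..2 * π, sin θ ^ 2 * cos θ := by
    rw [← integral_sub (Continuous.intervalIntegrable (by fun_prop) _ _)
      (Continuous.intervalIntegrable (by fun_prop) _ _)]
    congr 1 with θ
    ring
  rw [hf_eq, integral_sin_sq_mul_cos] at hf_pos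
  simpa using hf_pos

end Integrals

theorem V_eq_mul_div (x : ℝ) : V x = x * sinSqExpCosIntegral x / expCosIntegral x := by
  rw [V, integral_cos_mul_exp_mul_cos, expCosIntegral]

section V

variable {x : ℝ}

theorem V_pos (hx : 0 < x) : 0 < V x := by
  rw [V_eq_mul_div]
  exact div_pos (mul_pos hx (sinSqExpCosIntegral_pos x)) (expCosIntegral_pos x)

theorem V_neg (hx : x < 0) : V x < 0 := by
  rw [V_eq_mul_div]
  exact div_neg_of_neg_of_pos (mul_neg_of_neg_of_pos hx (sinSqExpCosIntegral_pos x))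
    (expCosIntegral_pos x)

theorem V_nonpos (hx : x ≤ 0) : V x ≤ 0 := by
  rw [V_eq_mul_div]
  exact div_nonpos_of_nonpos_of_nonneg
    (mul_nonpos_of_nonpos_of_nonneg hx (sinSqExpCosIntegral_pos x).le) (expCosIntegral_pos x).le

theorem V_lt_half (hx : 0 < x) : V x < x / 2 := by
  have hgap : 0 < expCosIntegral x - 2 * sinSqExpCosIntegral x := by
    rw [expCosIntegral_sub_two_mul_sinSqExpCosIntegral]
    exact mul_pos hx (integral_sin_sq_mul_cos_mul_exp_pos hx)
  rw [V_eq_mul_div, div_lt_iff₀ (expCosIntegral_pos x)]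
  nlinarith

theorem div_two_mul_exp_le_V (hx : 0 < x) : x / (2 * exp x) ≤ V x := by
  rw [V_eq_mul_div]
  calc x / (2 * exp x) = x * π / (2 * π * exp x) := by field_simp
    _ ≤ x * sinSqExpCosIntegral x / expCosIntegral x :=
      div_le_div₀ (mul_pos hx (sinSqExpCosIntegral_pos x)).le
        (mul_le_mul_of_nonneg_left (pi_le_sinSqExpCosIntegral x) hx.le) (expCosIntegral_pos x)
        (expCosIntegral_le_of_nonneg hx.le)

end V

theorem exists_le_V_mul_of_two_lt {K : ℝ} (hK : 2 < K) : ∃ r ∈ Ioc (0:ℝ) 1, r ≤ V (K * r) := by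
  have hK0 : 0 < K := by linarith
  have hlog : 0 < log (K / 2) := log_pos (by linarith)
  set r := min 1 (log (K / 2) / K)
  have hr : 0 < r := lt_min one_pos (div_pos hlog hK0)
  have hexp : exp (K * r) ≤ K / 2 := by
    rw [← le_log_iff_exp_le (by linarith), ← le_div_iff₀' hK0]
    exact min_le_right _ _
  refine ⟨r, ⟨hr, min_le_left _ _⟩, le_trans ?_ (div_two_mul_exp_le_V (by positivity))⟩
  rw [le_div_iff₀ (by positivity)]
  nlinarith

theorem V_lt_of_le_two_of_neg {K L r₁ r₂ : ℝ} (hK : K ≤ 2) (hL : L < 0) (hr₁ : 0 ≤ r₁)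
    (hr₂ : 0 ≤ r₂) (hr : (r₁, r₂) ≠ (0, 0)) : V (K * r₁ + L * r₂) < r₁ := by
  have hLr₂ : L * r₂ ≤ 0 := mul_nonpos_of_nonpos_of_nonneg hL.le hr₂
  rcases hr₁.eq_or_lt with rfl | hr₁
  · have hr₂ : 0 < r₂ := hr₂.lt_of_ne (by rintro rfl; exact hr rfl)
    simpa using V_neg (mul_neg_of_neg_of_pos hL hr₂)
  rcases le_or_gt (K * r₁ + L * r₂) 0 with hx | hx
  · linarith [V_nonpos hx]
  · have : K * r₁ ≤ 2 * r₁ := mul_le_mul_of_nonneg_right hK hr₁.le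
    linarith [V_lt_half hx]

theorem h1_neg_iff (K₁ L₁ : ℝ) (hL₁ : L₁ ≠ 0) :
    (∀ r₁ r₂ : ℝ, r₁ ∈ Icc (0:ℝ) 1 → r₂ ∈ Icc (0:ℝ) 1 → (r₁, r₂) ≠ (0, 0) →
        V (K₁ * r₁ + L₁ * r₂) - r₁ < 0) ↔ K₁ ≤ 2 ∧ L₁ < 0 := by
  constructor
  · intro H
    have hL : L₁ < 0 := by
      refine hL₁.lt_or_gt.resolve_right fun hL ↦ ?_
      have := H 0 1 (left_mem_Icc.mpr zero_le_one) (right_mem_Icc.mpr zero_le_one) (by simp)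
      simp only [mul_zero, mul_one, zero_add, sub_zero] at this
      exact (V_pos hL).not_gt this
    refine ⟨not_lt.mp fun hK ↦ ?_, hL⟩
    obtain ⟨r, ⟨hr, hr1⟩, hle⟩ := exists_le_V_mul_of_two_lt hK
    have := H r 0 ⟨hr.le, hr1⟩ (left_mem_Icc.mpr zero_le_one) (by simp [hr.ne'])
    simp only [mul_zero, add_zero] at this
    linarith
  · rintro ⟨hK, hL⟩ r₁ r₂ ⟨hr₁, -⟩ ⟨hr₂, -⟩ hr
    exact sub_neg.mpr (V_lt_of_le_two_of_neg hK hL hr₁ hr₂ hr)
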